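/- arXiv:1611.05921 — 3 statements merged into one kernel-verified Lean document; each statement's English description precedes it below -/
import Mathlib

section
/- Let n > 2 and let H be a subgroup of SL(n,ℤ) of level M, and suppose Γ_{n,m} ≤ H for some m ≥ 1. Then every prime p for which φ_p(H) is a proper subgroup of SL(n,ℤ/pℤ) divides M, and every prime dividing M divides m. -/
/-!
If `p ∤ M`, pick `b ∈ ℤ` with `b ≡ c M⁻¹ (mod p)`. The integral transvection `1 + b M E_ij` lies in
`Γ_{n,M} ≤ H` and reduces mod `p` to `1 + c E_ij`. Over the field `ℤ/pℤ` the transvections generate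
`SL(n)`, so `φ_p(H) = SL(n, ℤ/pℤ)`. The second claim is the minimality of the level `M`.
-/

/-- The reduction-mod-`m` homomorphism `φ_m : SL(n,ℤ) → SL(n, ℤ/mℤ)`. -/
def SLmod (n m : ℕ) :
    Matrix.SpecialLinearGroup (Fin n) ℤ →* Matrix.SpecialLinearGroup (Fin n) (ZMod m) :=
  Matrix.SpecialLinearGroup.map (Int.castRingHom (ZMod m))

namespace Matrix.SpecialLinearGroup

section Field

variable {ι F : Type*} [Fintype ι] [DecidableEq ι] [Field F]

theorem diag2n_eq_transvection_prod {i j : ι} (hij : i ≠ j) (a : F) (ha : a ≠ 0) :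
    diag2n hij a ha = transvection hij a * transvection hij.symm (-a⁻¹) * transvection hij a *
      transvection hij (-1) * transvection hij.symm 1 * transvection hij (-1) := by
  ext k l
  simp [diag2n_coe, transvection_coe, mul_add, add_mul, single_mul_single_of_ne _ _ _ _ hij,
    single_mul_single_of_ne _ _ _ _ hij.symm, diagonal_apply, one_apply, single_apply,
    mul_inv_cancel₀ ha, inv_mul_cancel₀ ha]
  split_ifs <;> grind

theorem eq_top_of_forall_transvection_mem {K : Subgroup (SpecialLinearGroup ι F)}
    (hK : ∀ (i j : ι) (hij : i ≠ j) (c : F), transvection hij c ∈ K) : K = ⊤ := by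
  refine eq_top_iff.2 fun g _ ↦ ?_
  rcases subsingleton_or_nontrivial ι with hι | hι
  · exact Subsingleton.elim g 1 ▸ K.one_mem
  refine diagonal_transvection_induction' (· ∈ K) g (fun i j hij a ha ↦ ?_) hK
    (fun _ _ ↦ K.mul_mem)
  rw [diag2n_eq_transvection_prod]
  repeat' apply K.mul_mem
  all_goals apply hK

end Field

theorem map_transvection {ι R S : Type*} [Fintype ι] [DecidableEq ι] [CommRing R] [CommRing S]
    (f : R →+* S) {i j : ι} (hij : i ≠ j) (c : R) :
    map f (transvection hij c) = transvection hij (f c) := by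
  ext k l
  simp [transvection_coe, one_apply, single_apply, apply_ite f]

end Matrix.SpecialLinearGroup

open Matrix.SpecialLinearGroup

theorem transvection_mem_map_SLmod_ker {n p M : ℕ} (hMp : M.Coprime p) {i j : Fin n}
    (hij : i ≠ j) (c : ZMod p) : transvection hij c ∈ (SLmod n M).ker.map (SLmod n p) := by
  obtain ⟨b, hb⟩ := ZMod.intCast_surjective (c * (M : ZMod p)⁻¹)
  have hMinv : (M : ZMod p)⁻¹ * M = 1 := by rw [mul_comm, ZMod.coe_mul_inv_eq_one M hMp]
  refine ⟨transvection hij (b * M), ?_, ?_⟩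
  · simp [SLmod, map_transvection]
  · simp [SLmod, map_transvection, hb, mul_assoc, hMinv]

theorem map_SLmod_ker_eq_top {n p M : ℕ} (hp : p.Prime) (hMp : M.Coprime p) :
    (SLmod n M).ker.map (SLmod n p) = ⊤ :=
  have : Fact p.Prime := ⟨hp⟩
  eq_top_of_forall_transvection_mem fun _ _ hij ↦ transvection_mem_map_SLmod_ker hMp hij

theorem map_SLmod_eq_top_of_ker_le {n p M : ℕ} (hp : p.Prime) (hpM : ¬ p ∣ M)
    {H : Subgroup (Matrix.SpecialLinearGroup (Fin n) ℤ)} (hH : (SLmod n M).ker ≤ H) :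
    H.map (SLmod n p) = ⊤ :=
  eq_top_mono (Subgroup.map_mono hH) (map_SLmod_ker_eq_top hp (hp.coprime_iff_not_dvd.2 hpM).symm)

theorem stmt1_general (n : ℕ) (H : Subgroup (Matrix.SpecialLinearGroup (Fin n) ℤ))
    (M : ℕ) (hlev1 : (SLmod n M).ker ≤ H)
    (hlev2 : ∀ m' : ℕ, 1 ≤ m' → (SLmod n m').ker ≤ H → M ∣ m')
    (m : ℕ) (hm : 1 ≤ m) (hker : (SLmod n m).ker ≤ H) :
    (∀ p : ℕ, p.Prime → Subgroup.map (SLmod n p) H ≠ ⊤ → p ∣ M) ∧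
      (∀ p : ℕ, p.Prime → p ∣ M → p ∣ m) := by
  refine ⟨fun p hp hHp ↦ ?_, fun p _ hpM ↦ hpM.trans (hlev2 m hm hker)⟩
  by_contra hpM
  exact hHp (map_SLmod_eq_top_of_ker_le hp hpM hlev1)

/-- If `H ≤ SL(n,ℤ)` has level `M` and `Γ_{n,m} ≤ H`, then every prime `p` with
`φ_p(H) ≠ SL(n, ℤ/pℤ)` divides `M`, and every prime dividing `M` divides `m`. -/
theorem stmt1 (n : ℕ) (hn : 2 < n) (H : Subgroup (Matrix.SpecialLinearGroup (Fin n) ℤ))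
    (M : ℕ) (hM : 1 ≤ M) (hlev1 : (SLmod n M).ker ≤ H)
    (hlev2 : ∀ m' : ℕ, 1 ≤ m' → (SLmod n m').ker ≤ H → M ∣ m')
    (m : ℕ) (hm : 1 ≤ m) (hker : (SLmod n m).ker ≤ H) :
    (∀ p : ℕ, p.Prime → Subgroup.map (SLmod n p) H ≠ ⊤ → p ∣ M) ∧
      (∀ p : ℕ, p.Prime → p ∣ M → p ∣ m) :=
  stmt1_general n H M hlev1 hlev2 m hm hker
end

section
/- Let p be a prime, a ≥ 2, and n ≥ 2. An element g of SL(n, ℤ/p^aℤ) lies in the kernel of ψ_{a,a-1} : SL(n, ℤ/p^aℤ) → SL(n, ℤ/p^{a-1}ℤ) if and only if there exists an integer matrix x of size n×n with trace(x) ≡ 0 (mod p) such that the underlying matrix of g equals 1 + (p^{a-1} : ℤ/p^aℤ) • (the entrywise reduction of x modulo p^a). -/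
/-- The reduction homomorphism `ψ_{a,b} : SL(n, ℤ/p^aℤ) → SL(n, ℤ/p^bℤ)` for `b ≤ a`. -/
def SLpow (n p a b : ℕ) (h : b ≤ a) :
    Matrix.SpecialLinearGroup (Fin n) (ZMod (p ^ a)) →*
      Matrix.SpecialLinearGroup (Fin n) (ZMod (p ^ b)) :=
  Matrix.SpecialLinearGroup.map (ZMod.castHom (pow_dvd_pow p h) (ZMod (p ^ b)))

/-!
Reduction modulo `p^{a-1}` kills `g` iff `g - 1` has all entries divisible by `p^{a-1}`, i.e.
`g = 1 + p^{a-1} x̄`. Since `(p^{a-1})² = 0` in `ℤ/p^aℤ`, expanding the determinant gives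
`det g = 1 + p^{a-1} tr x̄`, so `det g = 1` forces `p^a ∣ p^{a-1} tr x`, i.e. `p ∣ tr x`.
-/

theorem Matrix.det_one_add_smul_of_sq_eq_zero {R ι : Type*} [CommRing R] [Fintype ι]
    [DecidableEq ι] {c : R} (hc : c ^ 2 = 0) (M : Matrix ι ι R) :
    (1 + c • M).det = 1 + c * M.trace := by
  rw [Matrix.det_one_add_smul, hc, mul_zero, add_zero, mul_comm]

theorem ZMod.castHom_eq_zero_iff {k m : ℕ} (h : m ∣ k) (y : ZMod k) :
    ZMod.castHom h (ZMod m) y = 0 ↔ ∃ z : ℤ, y = m * z := by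
  obtain ⟨t, rfl⟩ := ZMod.intCast_surjective y
  constructor
  · intro ht
    rw [map_intCast, ZMod.intCast_zmod_eq_zero_iff_dvd] at ht
    obtain ⟨z, rfl⟩ := ht
    exact ⟨z, by push_cast; rfl⟩
  · rintro ⟨z, hz⟩
    rw [hz, map_mul, map_natCast, map_intCast, ZMod.natCast_self, zero_mul]

theorem Matrix.map_castHom_eq_zero_iff {ι κ : Type*} {k m : ℕ} (h : m ∣ k)
    (M : Matrix ι κ (ZMod k)) :
    M.map (ZMod.castHom h (ZMod m)) = 0 ↔
      ∃ x : Matrix ι κ ℤ, M = (m : ZMod k) • x.map (Int.cast : ℤ → ZMod k) := by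
  constructor
  · intro hM
    choose x hx using fun i j => (ZMod.castHom_eq_zero_iff h (M i j)).1 (congrFun₂ hM i j)
    exact ⟨Matrix.of x, Matrix.ext hx⟩
  · rintro ⟨x, rfl⟩
    ext i j
    exact (ZMod.castHom_eq_zero_iff h _).2 ⟨x i j, rfl⟩

theorem Matrix.SpecialLinearGroup.mem_ker_map_castHom_iff {ι : Type*} [Fintype ι]
    [DecidableEq ι] {k m : ℕ} (h : m ∣ k) (g : Matrix.SpecialLinearGroup ι (ZMod k)) :
    g ∈ (Matrix.SpecialLinearGroup.map (ZMod.castHom h (ZMod m))).ker ↔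
      ∃ x : Matrix ι ι ℤ,
        (g : Matrix ι ι (ZMod k)) = 1 + (m : ZMod k) • x.map (Int.cast : ℤ → ZMod k) := by
  have hsub : ((g : Matrix ι ι (ZMod k)) - 1).map (ZMod.castHom h (ZMod m)) =
      (g : Matrix ι ι (ZMod k)).map (ZMod.castHom h (ZMod m)) - 1 := by
    rw [Matrix.map_sub _ (map_sub _), Matrix.map_one _ (map_zero _) (map_one _)]
  have hker : Matrix.SpecialLinearGroup.map (ZMod.castHom h (ZMod m)) g = 1 ↔
      (g : Matrix ι ι (ZMod k)).map (ZMod.castHom h (ZMod m)) = 1 :=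
    Subtype.ext_iff
  rw [MonoidHom.mem_ker, hker, ← sub_eq_zero, ← hsub, Matrix.map_castHom_eq_zero_iff]
  simp only [sub_eq_iff_eq_add']

theorem ZMod.natCast_mul_intCast_eq_zero_iff {k m p : ℕ} (hk : k = m * p) (hm : m ≠ 0)
    (t : ℤ) : (m : ZMod k) * (t : ZMod k) = 0 ↔ (t : ZMod p) = 0 := by
  subst hk
  rw [← Int.cast_natCast, ← Int.cast_mul, ZMod.intCast_zmod_eq_zero_iff_dvd,
    ZMod.intCast_zmod_eq_zero_iff_dvd, Nat.cast_mul,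
    mul_dvd_mul_iff_left (by exact_mod_cast hm)]

theorem stmt2_general (p : ℕ) (hp : p.Prime) (a : ℕ) (ha : 2 ≤ a) (n : ℕ)
    (g : Matrix.SpecialLinearGroup (Fin n) (ZMod (p ^ a))) :
    g ∈ (SLpow n p a (a - 1) (Nat.sub_le a 1)).ker ↔
      ∃ x : Matrix (Fin n) (Fin n) ℤ, ((x.trace : ℤ) : ZMod p) = 0 ∧
        (g : Matrix (Fin n) (Fin n) (ZMod (p ^ a))) =
          1 + ((p ^ (a - 1) : ℕ) : ZMod (p ^ a)) • x.map (Int.cast : ℤ → ZMod (p ^ a)) := by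
  rw [SLpow, Matrix.SpecialLinearGroup.mem_ker_map_castHom_iff]
  refine ⟨fun ⟨x, hx⟩ => ⟨x, ?_, hx⟩, fun ⟨x, _, hx⟩ => ⟨x, hx⟩⟩
  have hsq : ((p ^ (a - 1) : ℕ) : ZMod (p ^ a)) ^ 2 = 0 := by
    rw [← Nat.cast_pow, ZMod.natCast_eq_zero_iff, ← pow_mul]
    exact pow_dvd_pow p (by omega)
  have htrace : (x.map (Int.cast : ℤ → ZMod (p ^ a))).trace = x.trace :=
    (AddMonoidHom.map_trace (Int.castAddHom (ZMod (p ^ a))) x).symm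
  have hdet := g.det_coe
  rw [hx, Matrix.det_one_add_smul_of_sq_eq_zero hsq, htrace, add_eq_left] at hdet
  exact (ZMod.natCast_mul_intCast_eq_zero_iff (by rw [← pow_succ, Nat.sub_add_cancel (by omega)])
    (pow_ne_zero _ hp.ne_zero) _).1 hdet

/-- An element `g ∈ SL(n, ℤ/p^aℤ)` lies in the kernel of `ψ_{a,a-1}` iff its underlying
matrix is `1 + p^{a-1} • x̄` for an integer matrix `x` with `trace(x) ≡ 0 (mod p)`. -/
theorem stmt2 (p : ℕ) (hp : p.Prime) (a : ℕ) (ha : 2 ≤ a) (n : ℕ) (hn : 2 ≤ n)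
    (g : Matrix.SpecialLinearGroup (Fin n) (ZMod (p ^ a))) :
    g ∈ (SLpow n p a (a - 1) (Nat.sub_le a 1)).ker ↔
      ∃ x : Matrix (Fin n) (Fin n) ℤ, ((x.trace : ℤ) : ZMod p) = 0 ∧
        (g : Matrix (Fin n) (Fin n) (ZMod (p ^ a))) =
          1 + ((p ^ (a - 1) : ℕ) : ZMod (p ^ a)) • x.map (Int.cast : ℤ → ZMod (p ^ a)) :=
  stmt2_general p hp a ha n g
end

section
/- Let n > 2 and let H be a subgroup of SL(n,ℤ). (a) If m and m' are positive integers with m dividing m', then δ_H(m) divides δ_H(m'). (b) If H has level M, then δ_H(M) equals the index of H in SL(n,ℤ); moreover for every m ≥ 1, δ_H(m) divides δ_H(M), and δ_H(m) = δ_H(M) if and only if M divides m. -/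
/-- `δ_H(m)`: the index of `φ_m(H)` in `SL(n, ℤ/mℤ)`. -/
noncomputable def deltaH (n : ℕ) (H : Subgroup (Matrix.SpecialLinearGroup (Fin n) ℤ)) (m : ℕ) : ℕ :=
  (Subgroup.map (SLmod n m) H).index

theorem Ideal.mul_eq_zero_of_sq_eq_bot {R : Type*} [CommRing R] {I : Ideal R} (hI : I ^ 2 = ⊥)
    {x y : R} (hx : x ∈ I) (hy : y ∈ I) : x * y = 0 := by
  have := Ideal.mul_mem_mul hx hy
  rwa [← sq, hI, Ideal.mem_bot] at this

namespace Matrix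

variable {n R S S' : Type*} [DecidableEq n] [CommRing R] [CommRing S] [CommRing S']

theorem transvection_map (f : R →+* S) (i j : n) (c : R) :
    (transvection i j c).map f = transvection i j (f c) := by
  simp [transvection, Matrix.map_add]

variable [Fintype n]

variable (n R) in
def transvectionSubmonoid : Submonoid (Matrix n n R) :=
  Submonoid.closure (Set.range TransvectionStruct.toMatrix)

variable (n R) in
def TransvectionsGenerateSL : Prop :=
  ∀ A : Matrix n n R, A.det = 1 → A ∈ transvectionSubmonoid n R

theorem transvection_mem_transvectionSubmonoid {i j : n} (h : i ≠ j) (c : R) :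
    transvection i j c ∈ transvectionSubmonoid n R :=
  Submonoid.subset_closure ⟨⟨i, j, h, c⟩, rfl⟩

theorem det_eq_one_of_mem_transvectionSubmonoid {A : Matrix n n R}
    (hA : A ∈ transvectionSubmonoid n R) : A.det = 1 := by
  induction hA using Submonoid.closure_induction with
  | mem _ ht => obtain ⟨t, rfl⟩ := ht; exact det_transvection_of_ne _ _ t.hij _
  | one => exact det_one
  | mul _ _ _ _ hA hB => rw [det_mul, hA, hB, one_mul]

theorem nonsing_inv_mem_transvectionSubmonoid {A : Matrix n n R}
    (hA : A ∈ transvectionSubmonoid n R) : A⁻¹ ∈ transvectionSubmonoid n R := by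
  induction hA using Submonoid.closure_induction with
  | mem _ ht =>
    obtain ⟨t, rfl⟩ := ht
    rw [inv_eq_left_inv t.inv_mul]
    exact Submonoid.subset_closure ⟨t.inv, rfl⟩
  | one => simp [one_mem]
  | mul _ _ _ _ hA hB =>
    rw [mul_inv_rev]
    exact mul_mem hB hA

theorem exists_map_eq_of_mem_transvectionSubmonoid {f : R →+* S} (hf : Function.Surjective f)
    {B : Matrix n n S} (hB : B ∈ transvectionSubmonoid n S) :
    ∃ A ∈ transvectionSubmonoid n R, A.map f = B := by
  induction hB using Submonoid.closure_induction with
  | mem _ ht =>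
    obtain ⟨⟨i, j, hij, c⟩, rfl⟩ := ht
    obtain ⟨c, rfl⟩ := hf c
    exact ⟨_, transvection_mem_transvectionSubmonoid hij c, transvection_map f i j c⟩
  | one => exact ⟨1, one_mem _, Matrix.map_one f f.map_zero f.map_one⟩
  | mul _ _ _ _ hB hC =>
    obtain ⟨A, hA, rfl⟩ := hB
    obtain ⟨A', hA', rfl⟩ := hC
    exact ⟨A * A', mul_mem hA hA', Matrix.map_mul⟩

theorem exists_map_eq_and_map_eq_one_of_mem_transvectionSubmonoid (f : R →+* S) (g : R →+* S')
    (σ : S → R) (hfσ : ∀ c, f (σ c) = c) (hgσ : ∀ c, g (σ c) = 0) {B : Matrix n n S}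
    (hB : B ∈ transvectionSubmonoid n S) :
    ∃ A ∈ transvectionSubmonoid n R, A.map f = B ∧ A.map g = 1 := by
  induction hB using Submonoid.closure_induction with
  | mem _ ht =>
    obtain ⟨⟨i, j, hij, c⟩, rfl⟩ := ht
    refine ⟨_, transvection_mem_transvectionSubmonoid hij (σ c), ?_, ?_⟩ <;>
      simp [transvection_map, hfσ, hgσ]
  | one =>
    exact ⟨1, one_mem _, Matrix.map_one f f.map_zero f.map_one, Matrix.map_one g g.map_zero g.map_one⟩
  | mul _ _ _ _ hB hC =>
    obtain ⟨A, hA, rfl, hgA⟩ := hB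
    obtain ⟨A', hA', rfl, hgA'⟩ := hC
    exact ⟨A * A', mul_mem hA hA', Matrix.map_mul, by rw [Matrix.map_mul, hgA, hgA', one_mul]⟩

theorem map_mem_transvectionSubmonoid (f : R →+* S) {A : Matrix n n R}
    (hA : A ∈ transvectionSubmonoid n R) : A.map f ∈ transvectionSubmonoid n S := by
  induction hA using Submonoid.closure_induction with
  | mem _ ht =>
    obtain ⟨⟨i, j, hij, c⟩, rfl⟩ := ht
    exact transvection_map f i j c ▸ transvection_mem_transvectionSubmonoid hij (f c)
  | one => simp [one_mem]
  | mul _ _ _ _ hA hB => simpa [Matrix.map_mul] using mul_mem hA hB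

theorem diagonal_mulSingle_mul_mulSingle_mem_transvectionSubmonoid {i j : n} (h : i ≠ j)
    {u v : R} (huv : u * v = 1) :
    diagonal (Pi.mulSingle i u * Pi.mulSingle j v) ∈ transvectionSubmonoid n R := by
  have whitehead : diagonal (Pi.mulSingle i u * Pi.mulSingle j v) =
      transvection i j u * (transvection j i (-v) * (transvection i j u *
        (transvection i j (-1) * (transvection j i 1 * transvection i j (-1))))) := by
    ext a b
    obtain rfl | hai := eq_or_ne a i
    · simp only [transvection_mul_apply_same, transvection_mul_apply_of_ne _ _ _ _ h,
        transvection_mul_apply_of_ne _ _ _ _ h.symm]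
      simp [transvection, one_apply, single_apply, diagonal_apply, Pi.mulSingle_apply]
      grind
    obtain rfl | haj := eq_or_ne a j
    · simp only [transvection_mul_apply_same, transvection_mul_apply_of_ne _ _ _ _ h,
        transvection_mul_apply_of_ne _ _ _ _ h.symm]
      simp [transvection, one_apply, single_apply, diagonal_apply, Pi.mulSingle_apply]
      grind
    · simp only [transvection_mul_apply_of_ne _ _ _ _ hai,
        transvection_mul_apply_of_ne _ _ _ _ haj]
      simp [transvection, one_apply, single_apply, diagonal_apply, Pi.mulSingle_apply]
      grind
  rw [whitehead]
  have hT {k l : n} (hkl : k ≠ l) (c : R) := transvection_mem_transvectionSubmonoid hkl c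
  exact mul_mem (hT h _) (mul_mem (hT h.symm _) (mul_mem (hT h _) (mul_mem (hT h _)
    (mul_mem (hT h.symm _) (hT h _)))))

theorem diagonal_mem_transvectionSubmonoid {d : n → R} (hd : ∀ i, IsUnit (d i))
    (hprod : ∏ i, d i = 1) : diagonal d ∈ transvectionSubmonoid n R := by
  cases isEmpty_or_nonempty n
  · rw [Subsingleton.elim (diagonal d) 1]
    exact one_mem _
  obtain ⟨j⟩ := ‹Nonempty n›
  choose e he using fun i => (hd i).exists_right_inv
  have he_prod : ∏ i, e i = 1 := by
    calc ∏ i, e i = (∏ i, d i) * ∏ i, e i := by rw [hprod, one_mul]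
      _ = 1 := by rw [← Finset.prod_mul_distrib]; exact Finset.prod_eq_one fun i _ => he i
  have hd_eq : d = ∏ i, (Pi.mulSingle i (d i) * Pi.mulSingle j (e i)) := by
    have : ∏ i, (Pi.mulSingle j (e i) : n → R) = 1 := by
      ext k
      simp [Finset.prod_apply, Pi.mulSingle_apply, he_prod]
    rw [Finset.prod_mul_distrib, Finset.univ_prod_mulSingle, this, mul_one]
  -- Pulled back along `diagonal`, the product can be formed in the commutative monoid `n → R`.
  let diagonalSubmonoid := (transvectionSubmonoid n R).comap (diagonalRingHom n R).toMonoidHom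
  change d ∈ diagonalSubmonoid
  rw [hd_eq]
  refine Submonoid.prod_mem _ fun i _ => ?_
  obtain rfl | hij := eq_or_ne i j
  · rw [← Pi.mulSingle_mul, he, Pi.mulSingle_one]
    exact one_mem _
  · exact diagonal_mulSingle_mul_mulSingle_mem_transvectionSubmonoid hij (he i)

theorem mul_eq_zero_of_mem_matrix {I : Ideal R} (hI : I ^ 2 = ⊥) {X Y : Matrix n n R}
    (hX : X ∈ I.matrix n) (hY : Y ∈ I.matrix n) : X * Y = 0 := by
  ext i j
  exact Finset.sum_eq_zero fun k _ => Ideal.mul_eq_zero_of_sq_eq_bot hI (hX i k) (hY k j)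

theorem one_add_mem_transvectionSubmonoid_of_diag_eq_zero {I : Ideal R} (hI : I ^ 2 = ⊥)
    {N : Matrix n n R} (hN : N ∈ I.matrix n) (hdiag : ∀ i, N i i = 0) :
    1 + N ∈ transvectionSubmonoid n R := by
  let partialSum (s : Finset (n × n)) := ∑ p ∈ s, single p.1 p.2 (N p.1 p.2)
  have partialSum_mem (s) : partialSum s ∈ I.matrix n :=
    Ideal.sum_mem _ fun p _ => (single_mem_matrix I.zero_mem).mpr (hN p.1 p.2)
  suffices ∀ s, 1 + partialSum s ∈ transvectionSubmonoid n R by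
    simpa [partialSum, Fintype.sum_prod_type, ← matrix_eq_sum_single] using this Finset.univ
  intro s
  induction s using Finset.induction_on with
  | empty => simp [partialSum, one_mem]
  | insert p s hp ih =>
    have hsplit : 1 + partialSum (insert p s) =
        (1 + single p.1 p.2 (N p.1 p.2)) * (1 + partialSum s) := by
      rw [mul_add, add_mul, add_mul, mul_eq_zero_of_mem_matrix hI
        ((single_mem_matrix I.zero_mem).mpr (hN p.1 p.2)) (partialSum_mem s)]
      simp only [partialSum, Finset.sum_insert hp, one_mul, mul_one, add_zero]
      abel
    rw [hsplit]
    refine mul_mem ?_ ih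
    obtain ⟨i, j⟩ := p
    obtain rfl | hij := eq_or_ne i j
    · simp [hdiag, one_mem]
    · exact transvection_mem_transvectionSubmonoid hij _

theorem one_add_mem_transvectionSubmonoid {I : Ideal R} (hI : I ^ 2 = ⊥) {N : Matrix n n R}
    (hN : N ∈ I.matrix n) (hdet : (1 + N).det = 1) : 1 + N ∈ transvectionSubmonoid n R := by
  set D := diagonal fun i => N i i with hD_def
  have hD : D ∈ I.matrix n := fun i j => by
    rw [hD_def, diagonal_apply]
    split_ifs with h
    exacts [h ▸ hN i i, I.zero_mem]
  have hOff : 1 + (N - D) ∈ transvectionSubmonoid n R :=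
    one_add_mem_transvectionSubmonoid_of_diag_eq_zero hI (sub_mem hN hD) (by simp [D])
  have hsplit : 1 + N = (1 + (N - D)) * (1 + D) := by
    rw [add_mul, one_mul, mul_add, mul_one, mul_eq_zero_of_mem_matrix hI (sub_mem hN hD) hD]
    abel
  have hdetD : (1 + D).det = 1 := by
    rwa [hsplit, det_mul, det_eq_one_of_mem_transvectionSubmonoid hOff, one_mul] at hdet
  have hdiag : 1 + D = diagonal fun i => 1 + N i i := by
    rw [hD_def, ← diagonal_one, diagonal_add]
  rw [hsplit]
  refine mul_mem hOff ?_
  rw [hdiag] at hdetD ⊢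
  refine diagonal_mem_transvectionSubmonoid (fun i => ?_) (by rwa [det_diagonal] at hdetD)
  refine IsUnit.of_mul_eq_one (1 - N i i) ?_
  linear_combination -Ideal.mul_eq_zero_of_sq_eq_bot hI (hN i i) (hN i i)

theorem det_map_eq_one (f : R →+* S) {A : Matrix n n R} (hA : A.det = 1) : (A.map f).det = 1 := by
  rw [← RingHom.mapMatrix_apply, ← RingHom.map_det, hA, map_one]

namespace TransvectionsGenerateSL

theorem of_field {K : Type*} [Field K] : TransvectionsGenerateSL n K := by
  intro A hA
  obtain ⟨L, L', D, rfl⟩ := Pivot.exists_list_transvec_mul_diagonal_mul_list_transvec A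
  have list_prod_mem (L : List (TransvectionStruct n K)) :
      (L.map TransvectionStruct.toMatrix).prod ∈ transvectionSubmonoid n K :=
    Submonoid.list_prod_mem _ fun _ ht => by
      obtain ⟨t, -, rfl⟩ := List.mem_map.mp ht
      exact Submonoid.subset_closure ⟨t, rfl⟩
  have hD : ∏ i, D i = 1 := by
    simpa [det_mul, TransvectionStruct.det_toMatrix_prod] using hA
  have hD_unit (i : n) : IsUnit (D i) :=
    isUnit_iff_ne_zero.mpr fun h0 => by simp [Finset.prod_eq_zero (Finset.mem_univ i) h0] at hD
  exact mul_mem (mul_mem (list_prod_mem L) (diagonal_mem_transvectionSubmonoid hD_unit hD))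
    (list_prod_mem L')

theorem of_ringEquiv (e : R ≃+* S) (hR : TransvectionsGenerateSL n R) :
    TransvectionsGenerateSL n S := by
  intro A hA
  convert map_mem_transvectionSubmonoid (e : R →+* S)
    (hR _ (det_map_eq_one (e.symm : S →+* R) hA))
  ext
  simp

theorem prod (hR : TransvectionsGenerateSL n R) (hS : TransvectionsGenerateSL n S) :
    TransvectionsGenerateSL n (R × S) := by
  intro A hA
  obtain ⟨X, hX, hX₁, hX₂⟩ := exists_map_eq_and_map_eq_one_of_mem_transvectionSubmonoid
    (RingHom.fst R S) (RingHom.snd R S) (fun c => (c, 0)) (fun _ => rfl) (fun _ => rfl)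
    (hR _ (det_map_eq_one _ hA))
  obtain ⟨Y, hY, hY₂, hY₁⟩ := exists_map_eq_and_map_eq_one_of_mem_transvectionSubmonoid
    (RingHom.snd R S) (RingHom.fst R S) (fun c => (0, c)) (fun _ => rfl) (fun _ => rfl)
    (hS _ (det_map_eq_one _ hA))
  have h₁ : (X * Y).map (RingHom.fst R S) = A.map (RingHom.fst R S) := by
    rw [Matrix.map_mul, hX₁, hY₁, mul_one]
  have h₂ : (X * Y).map (RingHom.snd R S) = A.map (RingHom.snd R S) := by
    rw [Matrix.map_mul, hX₂, hY₂, one_mul]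
  convert mul_mem hX hY
  ext i j
  exacts [(congrFun₂ h₁ i j).symm, (congrFun₂ h₂ i j).symm]

theorem of_surjective_of_ker_sq_eq_bot (f : R →+* S) (hf : Function.Surjective f)
    (hker : RingHom.ker f ^ 2 = ⊥) (hS : TransvectionsGenerateSL n S) :
    TransvectionsGenerateSL n R := by
  intro A hA
  have hfA := det_map_eq_one f hA
  obtain ⟨Q, hQ, hQA⟩ := exists_map_eq_of_mem_transvectionSubmonoid hf
    (nonsing_inv_mem_transvectionSubmonoid (hS _ hfA))
  have hQ_unit : IsUnit Q.det := by
    rw [det_eq_one_of_mem_transvectionSubmonoid hQ]; exact isUnit_one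
  have hB : (Q * A).map f = 1 := by
    rw [Matrix.map_mul, hQA, nonsing_inv_mul _ (by rw [hfA]; exact isUnit_one)]
  have hB_ker : Q * A - 1 ∈ (RingHom.ker f).matrix n := by
    have : (Q * A - 1).map f = 0 := by
      rw [Matrix.map_sub f (map_sub f), hB, Matrix.map_one f f.map_zero f.map_one, sub_self]
    exact (Ideal.mem_matrix _ _ _).mpr fun i j => RingHom.mem_ker.mpr (congrFun₂ this i j)
  have hB_mem : Q * A ∈ transvectionSubmonoid n R := by
    simpa using one_add_mem_transvectionSubmonoid hker hB_ker
      (by simp [det_mul, det_eq_one_of_mem_transvectionSubmonoid hQ, hA])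
  rw [← nonsing_inv_mul_cancel_left Q A hQ_unit]
  exact mul_mem (nonsing_inv_mem_transvectionSubmonoid hQ) hB_mem

end TransvectionsGenerateSL

end Matrix

theorem ZMod.ker_castHom_sq_eq_bot {d m : ℕ} (hdvd : d ∣ m) (hsq : m ∣ d * d) :
    RingHom.ker (ZMod.castHom hdvd (ZMod d)) ^ 2 = ⊥ := by
  rw [sq, eq_bot_iff, Ideal.mul_le]
  intro x hx y hy
  obtain ⟨a, rfl⟩ := ZMod.intCast_surjective x
  obtain ⟨b, rfl⟩ := ZMod.intCast_surjective y
  rw [RingHom.mem_ker, map_intCast, ZMod.intCast_zmod_eq_zero_iff_dvd] at hx hy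
  rw [Ideal.mem_bot, ← Int.cast_mul, ZMod.intCast_zmod_eq_zero_iff_dvd]
  exact (Int.natCast_dvd_natCast.mpr hsq).trans (by push_cast; exact mul_dvd_mul hx hy)

namespace Matrix.TransvectionsGenerateSL

variable {n : Type*} [Fintype n] [DecidableEq n]

theorem zmod_prime_pow {p : ℕ} (hp : p.Prime) {k : ℕ} (hk : 0 < k) :
    TransvectionsGenerateSL n (ZMod (p ^ k)) := by
  induction k, hk using Nat.le_induction with
  | base =>
    have := Fact.mk hp
    rw [pow_one]
    exact of_field
  | succ k hk ih =>
    refine of_surjective_of_ker_sq_eq_bot _ (ZMod.castHom_surjective (pow_dvd_pow p k.le_succ))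
      (ZMod.ker_castHom_sq_eq_bot _ ?_) ih
    rw [← pow_add]
    exact pow_dvd_pow p (by omega)

theorem zmod (m : ℕ) [NeZero m] : TransvectionsGenerateSL n (ZMod m) := by
  have hm := NeZero.ne m
  induction m using Nat.recOnPosPrimePosCoprime with
  | prime_pow p k hp hk => exact zmod_prime_pow hp hk
  | zero => exact absurd rfl hm
  | one =>
    intro A _
    rw [Subsingleton.elim A 1]
    exact one_mem _
  | coprime a b ha hb hab iha ihb =>
    exact of_ringEquiv (ZMod.chineseRemainder hab).symm (prod (iha (by omega)) (ihb (by omega)))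

end Matrix.TransvectionsGenerateSL

open Matrix

theorem SLmod_surjective (n m : ℕ) [NeZero m] : Function.Surjective (SLmod n m) := by
  intro A
  obtain ⟨B, hB, hBA⟩ := exists_map_eq_of_mem_transvectionSubmonoid
    (ZMod.ringHom_surjective (Int.castRingHom (ZMod m))) (TransvectionsGenerateSL.zmod m _ A.2)
  exact ⟨⟨B, det_eq_one_of_mem_transvectionSubmonoid hB⟩, Subtype.ext hBA⟩

theorem SLmod_eq_comp (n : ℕ) {m m' : ℕ} (h : m ∣ m') :
    SLmod n m = (SpecialLinearGroup.map (ZMod.castHom h (ZMod m))).comp (SLmod n m') := by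
  ext A i j
  simp [SLmod]

theorem ker_SLmod_le_of_dvd (n : ℕ) {m m' : ℕ} (h : m ∣ m') :
    (SLmod n m').ker ≤ (SLmod n m).ker := by
  rw [SLmod_eq_comp n h, ← MonoidHom.comap_ker]
  exact MonoidHom.ker_le_comap _ _

theorem deltaH_dvd_of_dvd (n : ℕ) (H : Subgroup (SpecialLinearGroup (Fin n) ℤ)) {m m' : ℕ}
    [NeZero m] (h : m ∣ m') : deltaH n H m ∣ deltaH n H m' := by
  have hcomp := SLmod_eq_comp n h
  have hsurj := SLmod_surjective n m
  rw [hcomp, MonoidHom.coe_comp] at hsurj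
  rw [deltaH, deltaH, hcomp, ← Subgroup.map_map]
  exact Subgroup.index_map_dvd _ hsurj.of_comp

theorem deltaH_eq_index_of_ker_le {n m : ℕ} [NeZero m]
    {H : Subgroup (SpecialLinearGroup (Fin n) ℤ)}
    (h : (SLmod n m).ker ≤ H) : deltaH n H m = H.index :=
  Subgroup.index_map_eq H (SLmod_surjective n m) h

theorem ker_SLmod_le_of_deltaH_eq_index {n m : ℕ} [NeZero m]
    {H : Subgroup (SpecialLinearGroup (Fin n) ℤ)} [H.FiniteIndex] (h : deltaH n H m = H.index) :
    (SLmod n m).ker ≤ H := by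
  set H' := (H.map (SLmod n m)).comap (SLmod n m)
  have hle : H ≤ H' := Subgroup.le_comap_map _ _
  have hidx : H'.index = H.index :=
    (Subgroup.index_comap_of_surjective _ (SLmod_surjective n m)).trans h
  have hH' : H = H' := hle.lt_or_eq.resolve_left fun hlt => (Subgroup.index_strictAnti hlt).ne hidx
  exact hH' ▸ MonoidHom.ker_le_comap _ _

theorem stmt15_general (n : ℕ) (H : Subgroup (Matrix.SpecialLinearGroup (Fin n) ℤ)) :
    (∀ m m' : ℕ, 0 < m → 0 < m' → m ∣ m' → deltaH n H m ∣ deltaH n H m') ∧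
    (∀ M : ℕ, 1 ≤ M → (SLmod n M).ker ≤ H →
      (∀ m : ℕ, 1 ≤ m → (SLmod n m).ker ≤ H → M ∣ m) →
      deltaH n H M = H.index ∧
        ∀ m : ℕ, 1 ≤ m →
          (deltaH n H m ∣ deltaH n H M ∧ (deltaH n H m = deltaH n H M ↔ M ∣ m))) := by
  refine ⟨fun m m' hm _ h => have : NeZero m := ⟨hm.ne'⟩; deltaH_dvd_of_dvd n H h, ?_⟩
  intro M hM hker hlevel
  have : NeZero M := ⟨by omega⟩
  have hδM := deltaH_eq_index_of_ker_le hker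
  have : H.FiniteIndex := Subgroup.finiteIndex_of_le hker
  refine ⟨hδM, fun m hm => ?_⟩
  have : NeZero m := ⟨by omega⟩
  have : NeZero (m * M) := ⟨by positivity⟩
  refine ⟨?_, fun h => hlevel m hm (ker_SLmod_le_of_deltaH_eq_index (h.trans hδM)), fun h => ?_⟩
  · have hker' := (ker_SLmod_le_of_dvd n (dvd_mul_left M m)).trans hker
    rw [hδM, ← deltaH_eq_index_of_ker_le hker']
    exact deltaH_dvd_of_dvd n H (dvd_mul_right m M)
  · rw [hδM, deltaH_eq_index_of_ker_le ((ker_SLmod_le_of_dvd n h).trans hker)]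

/-- Basic properties of `δ_H`: (a) `m ∣ m'` implies `δ_H(m) ∣ δ_H(m')`;
(b) if `H` has level `M` then `δ_H(M) = |SL(n,ℤ) : H|`, `δ_H(m) ∣ δ_H(M)` for all `m`,
and `δ_H(m) = δ_H(M)` iff `M ∣ m`. -/
theorem stmt15 (n : ℕ) (hn : 2 < n) (H : Subgroup (Matrix.SpecialLinearGroup (Fin n) ℤ)) :
    (∀ m m' : ℕ, 0 < m → 0 < m' → m ∣ m' → deltaH n H m ∣ deltaH n H m') ∧
    (∀ M : ℕ, 1 ≤ M → (SLmod n M).ker ≤ H →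
      (∀ m : ℕ, 1 ≤ m → (SLmod n m).ker ≤ H → M ∣ m) →
      deltaH n H M = H.index ∧
        ∀ m : ℕ, 1 ≤ m →
          (deltaH n H m ∣ deltaH n H M ∧ (deltaH n H m = deltaH n H M ↔ M ∣ m))) :=
  stmt15_general n H
end
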